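/- Let G be a D-regular Bonnet-Myers sharp graph of diameter L with pole x_0. For any x_1 ∈ S_1(x_0) and x_2 ∈ S_2(x_0) with x_1 ~ x_2, there exists a unique vertex x̄_1 ∈ S_1(x_0) such that x̄_1 ~ x_2 and x̄_1 is neither equal nor adjacent to x_1. In other words, the interval [x_0, x_2] induces a cocktail party graph. -/

import Mathlib

/-!
Sharpness gives `(D+1) W₁(μ_y, μ_z) ≤ D + 1 - 2D/L` on every edge, hence `d(y,z)` times this
bound for all `y, z`. Testing against the 1-Lipschitz potentials `d(x₀,·)` and `d(p,·)`, where
`d(x₀,p) = L`, bounds `∑_{B₁(y)} d(x₀,·) + ∑_{B₁(y)} d(p,·)` by `(D+1)L` whenever `y ∈ [x₀,p]`,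
while the triangle inequality bounds it below by the same number. So the interval `[x₀,p]` is
closed under adjacency, i.e. it is the whole graph, and `d(x₀,·)` is an optimal Kantorovich
potential for every edge leading away from `x₀`. An optimal plan for such an edge moves mass only
along geodesics issuing from `x₀`.

For the edge `x₁x₂`, a vertex `w ∈ S₁(x₀) ∩ B₁(x₂) \ B₁(x₁)` can receive mass from `x₀` only, and
`x₀` has enough mass for one such `w`: uniqueness. For the edge `x₀x₁`, if there were no such `w`,
then `x₀` and all its neighbours adjacent to `x₂` would keep their mass, and nothing would reach
`x₂`: existence.
-/


open Finset

namespace BMS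

open scoped Classical

variable {V : Type*}

/-- The uniform probability measure on the closed 1-ball of `x` in a `D`-regular graph. -/
noncomputable def mu (G : SimpleGraph V) (D : ℕ) (x : V) : V → ℝ :=
  fun v => if G.dist x v ≤ 1 then 1 / (D + 1) else 0

/-- The L¹-Wasserstein distance between `μ_x` and `μ_y`, as an infimum over transport plans. -/
noncomputable def W1 (G : SimpleGraph V) [Fintype V] (D : ℕ) (x y : V) : ℝ :=
  sInf { c : ℝ | ∃ π : V → V → ℝ,
    (∀ u v, 0 ≤ π u v) ∧
    (∀ u, ∑ v, π u v = mu G D x u) ∧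
    (∀ v, ∑ u, π u v = mu G D y v) ∧
    c = ∑ u, ∑ v, (G.dist u v : ℝ) * π u v }

/-- Ollivier Ricci curvature (Lin–Lu–Yau normalization for regular graphs). -/
noncomputable def kappa (G : SimpleGraph V) [Fintype V] (D : ℕ) (x y : V) : ℝ :=
  ((D + 1) / D) * (1 - W1 G D x y)

/-- `G` is Bonnet–Myers sharp: the infimum of the curvature over edges equals `2 / L`. -/
def BMSharp (G : SimpleGraph V) [Fintype V] (D L : ℕ) : Prop :=
  sInf { k : ℝ | ∃ x y, G.Adj x y ∧ k = kappa G D x y } = 2 / (L : ℝ)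

/-- Number of neighbors of `y` at distance `k` from `x0`. -/
noncomputable def sphDeg (G : SimpleGraph V) [Fintype V] (x0 y : V) (k : ℕ) : ℕ :=
  (Finset.univ.filter (fun v => G.Adj y v ∧ G.dist x0 v = k)).card

/-- Number of triangles containing the edge `x ~ y` (common neighbors of `x` and `y`). -/
noncomputable def tri (G : SimpleGraph V) [Fintype V] (x y : V) : ℕ :=
  (Finset.univ.filter (fun v => G.Adj x v ∧ G.Adj y v)).card

/-- A good optimal transport map from `B_1(a)` to `B_1(b)`: a bijection between the 1-balls,
fixing exactly the vertices of `B_1(a) ∩ B_1(b)` (among the domain), whose cost realizes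
the Wasserstein distance `W1 (μ_a, μ_b)`. -/
def goodMap (G : SimpleGraph V) [Fintype V] (D : ℕ) (a b : V) (T : V → V) : Prop :=
  Set.BijOn T {v | G.dist a v ≤ 1} {v | G.dist b v ≤ 1} ∧
  (∀ v, G.dist a v ≤ 1 → (T v = v ↔ G.dist b v ≤ 1)) ∧
  (1 / (D + 1 : ℝ)) *
      ∑ v ∈ Finset.univ.filter (fun v => G.dist a v ≤ 1), (G.dist v (T v) : ℝ) =
    W1 G D a b

section Ball

variable {G : SimpleGraph V} {D : ℕ}

lemma mu_nonneg (x v : V) : 0 ≤ mu G D x v := by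
  unfold mu; positivity

lemma mu_le_one (x v : V) : mu G D x v ≤ 1 := by
  unfold mu
  split_ifs
  · rw [div_le_one (by positivity)]; linarith
  · exact zero_le_one

lemma dist_sub_dist_le (hconn : G.Connected) (a u v : V) :
    (G.dist a v : ℝ) - G.dist a u ≤ G.dist u v := by
  have : G.dist a v ≤ G.dist a u + G.dist u v := hconn.dist_triangle
  rw [sub_le_iff_le_add']
  exact_mod_cast this

variable [Fintype V]

noncomputable def ball (G : SimpleGraph V) (y : V) : Finset V :=
  univ.filter (fun v => G.dist y v ≤ 1)

lemma mem_ball {y v : V} : v ∈ ball G y ↔ G.dist y v ≤ 1 := by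
  simp [ball]

lemma mem_ball_iff (hconn : G.Connected) {y v : V} : v ∈ ball G y ↔ v = y ∨ G.Adj y v := by
  rw [mem_ball, Nat.le_one_iff_eq_zero_or_eq_one, hconn.dist_eq_zero_iff,
    SimpleGraph.dist_eq_one_iff_adj, eq_comm]

lemma mu_of_mem_ball {x v : V} (h : v ∈ ball G x) : mu G D x v = 1 / (D + 1) :=
  if_pos (mem_ball.mp h)

lemma mu_of_notMem_ball {x v : V} (h : v ∉ ball G x) : mu G D x v = 0 :=
  if_neg (mt mem_ball.mpr h)

lemma card_ball (hconn : G.Connected) (hreg : G.IsRegularOfDegree D) (y : V) :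
    #(ball G y) = D + 1 := by
  have : ball G y = insert y (G.neighborFinset y) := by
    ext v
    simp [mem_ball_iff hconn]
  rw [this, card_insert_of_notMem (by simp), G.card_neighborFinset_eq_degree, hreg y]

lemma sum_ball_dist_self (hconn : G.Connected) (hreg : G.IsRegularOfDegree D) (y : V) :
    ∑ v ∈ ball G y, (G.dist y v : ℝ) = D := by
  have : ∀ v ∈ ball G y, (G.dist y v : ℝ) = 1 - if v = y then 1 else 0 := by
    intro v hv
    rcases (mem_ball_iff hconn).mp hv with rfl | hadj
    · simp
    · simp [SimpleGraph.dist_eq_one_iff_adj.mpr hadj, hadj.ne']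
  rw [sum_congr rfl this, sum_sub_distrib, sum_ite_eq', if_pos (mem_ball.mpr (by simp)),
    sum_const, card_ball hconn hreg]
  simp

lemma sum_mul_mu (y : V) (φ : V → ℝ) :
    ∑ v, φ v * mu G D y v = (∑ v ∈ ball G y, φ v) / (D + 1) := by
  rw [ball, sum_filter, sum_div]
  refine sum_congr rfl fun v _ => ?_
  by_cases h : G.dist y v ≤ 1 <;> simp [mu, h, div_eq_mul_inv]

lemma sum_mu (hconn : G.Connected) (hreg : G.IsRegularOfDegree D) (y : V) :
    ∑ v, mu G D y v = 1 := by
  have := sum_mul_mu (G := G) (D := D) y 1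
  simp only [Pi.one_apply, one_mul, sum_const, card_ball hconn hreg, nsmul_eq_mul, mul_one] at this
  rw [this]
  push_cast
  exact div_self (by positivity)

end Ball

section Transport

variable [Fintype V] {G : SimpleGraph V} {D : ℕ} {x y : V} {π : V → V → ℝ}

structure IsTransportPlan (G : SimpleGraph V) (D : ℕ) (x y : V) (π : V → V → ℝ) : Prop where
  nonneg : ∀ u v, 0 ≤ π u v
  sum_left : ∀ u, ∑ v, π u v = mu G D x u
  sum_right : ∀ v, ∑ u, π u v = mu G D y v

noncomputable def transportCost (G : SimpleGraph V) (π : V → V → ℝ) : ℝ :=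
  ∑ u, ∑ v, (G.dist u v : ℝ) * π u v

namespace IsTransportPlan

lemma le_mu_left (hπ : IsTransportPlan G D x y π) (u v : V) : π u v ≤ mu G D x u :=
  hπ.sum_left u ▸ single_le_sum (fun w _ => hπ.nonneg u w) (mem_univ v)

lemma le_mu_right (hπ : IsTransportPlan G D x y π) (u v : V) : π u v ≤ mu G D y v :=
  hπ.sum_right v ▸ single_le_sum (f := fun w => π w v) (fun w _ => hπ.nonneg w v) (mem_univ u)

lemma eq_zero_of_notMem_ball (hπ : IsTransportPlan G D x y π) {u : V} (hu : u ∉ ball G x)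
    (v : V) : π u v = 0 :=
  le_antisymm (mu_of_notMem_ball hu ▸ hπ.le_mu_left u v) (hπ.nonneg u v)

lemma eq_mu_right_of_forall_ne (hπ : IsTransportPlan G D x y π) {u₀ v : V}
    (h : ∀ u ≠ u₀, π u v = 0) : π u₀ v = mu G D y v := by
  rw [← hπ.sum_right v, sum_eq_single u₀ (fun u _ hu => h u hu) (by simp)]

lemma eq_zero_of_eq_mu_left (hπ : IsTransportPlan G D x y π) {u v₀ v : V}
    (h : π u v₀ = mu G D x u) (hv : v ≠ v₀) : π u v = 0 := by
  have hsum := hπ.sum_left u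
  rw [← add_sum_erase _ _ (mem_univ v₀), h, add_eq_left] at hsum
  exact (sum_eq_zero_iff_of_nonneg fun w _ => hπ.nonneg u w).mp hsum v (by simp [hv])

end IsTransportPlan

lemma isTransportPlan_mul (hconn : G.Connected) (hreg : G.IsRegularOfDegree D) (x y : V) :
    IsTransportPlan G D x y fun u v => mu G D x u * mu G D y v where
  nonneg u v := mul_nonneg (mu_nonneg x u) (mu_nonneg y v)
  sum_left u := by rw [← mul_sum, sum_mu hconn hreg, mul_one]
  sum_right v := by rw [← sum_mul, sum_mu hconn hreg, one_mul]

lemma isTransportPlan_diag (y : V) :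
    IsTransportPlan G D y y fun u v => if u = v then mu G D y u else 0 where
  nonneg u v := by split_ifs <;> simp [mu_nonneg]
  sum_left u := by simp
  sum_right v := by simp

lemma W1_eq_sInf (x y : V) :
    W1 G D x y = sInf (transportCost G '' {π | IsTransportPlan G D x y π}) := by
  unfold W1
  congr 1
  ext c
  constructor
  · rintro ⟨π, h₁, h₂, h₃, rfl⟩
    exact ⟨π, ⟨h₁, h₂, h₃⟩, rfl⟩
  · rintro ⟨π, ⟨h₁, h₂, h₃⟩, rfl⟩
    exact ⟨π, h₁, h₂, h₃, rfl⟩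

lemma isCompact_setOf_isTransportPlan (x y : V) :
    IsCompact {π | IsTransportPlan G D x y π} := by
  have hclosed : IsClosed {π | IsTransportPlan G D x y π} := by
    have : {π | IsTransportPlan G D x y π} =
        (⋂ u, ⋂ v, {π : V → V → ℝ | 0 ≤ π u v}) ∩ (⋂ u, {π | ∑ v, π u v = mu G D x u}) ∩
          ⋂ v, {π | ∑ u, π u v = mu G D y v} := by
      ext π
      simp only [Set.mem_ofPred_eq, Set.mem_inter_iff, Set.mem_iInter]
      exact ⟨fun h => ⟨⟨h.1, h.2⟩, h.3⟩, fun h => ⟨h.1.1, h.1.2, h.2⟩⟩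
    rw [this]
    refine ((isClosed_iInter fun u => isClosed_iInter fun v => isClosed_le continuous_const
      (by fun_prop)).inter (isClosed_iInter fun u => isClosed_eq (by fun_prop) continuous_const)).inter
      (isClosed_iInter fun v => isClosed_eq (by fun_prop) continuous_const)
  refine (isCompact_univ_pi fun _ => isCompact_univ_pi fun _ => isCompact_Icc (a := (0 : ℝ))
    (b := 1)).of_isClosed_subset hclosed fun π hπ => ?_
  simp only [Set.mem_pi, Set.mem_univ, Set.mem_Icc, forall_const]
  exact fun u v => ⟨hπ.nonneg u v, (hπ.le_mu_left u v).trans (mu_le_one x u)⟩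

lemma exists_isTransportPlan_transportCost_eq (hconn : G.Connected)
    (hreg : G.IsRegularOfDegree D) (x y : V) :
    ∃ π, IsTransportPlan G D x y π ∧ transportCost G π = W1 G D x y := by
  have hcont : Continuous (transportCost G) := by unfold transportCost; fun_prop
  rw [W1_eq_sInf]
  have hne : {π | IsTransportPlan G D x y π}.Nonempty := ⟨_, isTransportPlan_mul hconn hreg x y⟩
  exact ((isCompact_setOf_isTransportPlan x y).image hcont).sInf_mem (hne.image _)

lemma W1_le_transportCost (hπ : IsTransportPlan G D x y π) : W1 G D x y ≤ transportCost G π := by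
  rw [W1_eq_sInf]
  refine csInf_le ⟨0, ?_⟩ ⟨π, hπ, rfl⟩
  rintro _ ⟨σ, hσ, rfl⟩
  exact sum_nonneg fun u _ => sum_nonneg fun v _ => mul_nonneg (by positivity) (hσ.nonneg u v)

end Transport

section Duality

variable [Fintype V] {G : SimpleGraph V} {D : ℕ} {x y : V} {π : V → V → ℝ}

lemma IsTransportPlan.transportCost_eq (hπ : IsTransportPlan G D x y π) (φ : V → ℝ) :
    transportCost G π = ∑ u, ∑ v, π u v * ((G.dist u v : ℝ) - (φ v - φ u)) +
      (∑ v ∈ ball G y, φ v - ∑ u ∈ ball G x, φ u) / (D + 1) := by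
  have hv : ∑ u, ∑ v, π u v * φ v = (∑ v ∈ ball G y, φ v) / (D + 1) := by
    rw [sum_comm, ← sum_mul_mu]
    exact sum_congr rfl fun v _ => by rw [← sum_mul, hπ.sum_right, mul_comm]
  have hu : ∑ u, ∑ v, π u v * φ u = (∑ u ∈ ball G x, φ u) / (D + 1) := by
    rw [← sum_mul_mu]
    exact sum_congr rfl fun u _ => by rw [← sum_mul, hπ.sum_left, mul_comm]
  rw [sub_div, ← hv, ← hu, transportCost, ← sum_sub_distrib, ← sum_add_distrib]
  refine sum_congr rfl fun u _ => ?_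
  rw [← sum_sub_distrib, ← sum_add_distrib]
  exact sum_congr rfl fun v _ => by ring

lemma le_W1 (hconn : G.Connected) (hreg : G.IsRegularOfDegree D) (φ : V → ℝ)
    (hφ : ∀ u v, φ v - φ u ≤ G.dist u v) :
    (∑ v ∈ ball G y, φ v - ∑ u ∈ ball G x, φ u) / (D + 1) ≤ W1 G D x y := by
  obtain ⟨π, hπ, hcost⟩ := exists_isTransportPlan_transportCost_eq hconn hreg x y
  rw [← hcost, hπ.transportCost_eq φ]
  exact le_add_of_nonneg_left <| sum_nonneg fun u _ => sum_nonneg fun v _ =>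
    mul_nonneg (hπ.nonneg u v) (sub_nonneg.mpr (hφ u v))

lemma exists_isTransportPlan_of_W1_eq (hconn : G.Connected) (hreg : G.IsRegularOfDegree D)
    (φ : V → ℝ) (hφ : ∀ u v, φ v - φ u ≤ G.dist u v)
    (hW : W1 G D x y = (∑ v ∈ ball G y, φ v - ∑ u ∈ ball G x, φ u) / (D + 1)) :
    ∃ π, IsTransportPlan G D x y π ∧ ∀ u v, π u v ≠ 0 → φ v - φ u = G.dist u v := by
  obtain ⟨π, hπ, hcost⟩ := exists_isTransportPlan_transportCost_eq hconn hreg x y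
  refine ⟨π, hπ, fun u v huv => ?_⟩
  have hterm_nonneg : ∀ u v, 0 ≤ π u v * ((G.dist u v : ℝ) - (φ v - φ u)) :=
    fun u v => mul_nonneg (hπ.nonneg u v) (sub_nonneg.mpr (hφ u v))
  have hdefect : ∑ u, ∑ v, π u v * ((G.dist u v : ℝ) - (φ v - φ u)) = 0 := by
    linarith [hπ.transportCost_eq φ]
  rw [sum_eq_zero_iff_of_nonneg fun u _ => sum_nonneg fun v _ => hterm_nonneg u v] at hdefect
  have := (sum_eq_zero_iff_of_nonneg fun v _ => hterm_nonneg u v).mp (hdefect u (mem_univ u)) v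
    (mem_univ v)
  linarith [(mul_eq_zero.mp this).resolve_left huv]

end Duality

section Gluing

variable [Fintype V] {G : SimpleGraph V} {D : ℕ} {x m y : V} {π₁ π₂ : V → V → ℝ}

/-- Where `ν` vanishes the junk value `_ / 0 = 0` is harmless: the corresponding column of `π₁`
and row of `π₂` vanish as well. -/
noncomputable def glue (π₁ π₂ : V → V → ℝ) (ν : V → ℝ) (u w : V) : ℝ :=
  ∑ v, π₁ u v * π₂ v w / ν v

lemma sum_glue_summand_right (h₁ : IsTransportPlan G D x m π₁) (h₂ : IsTransportPlan G D m y π₂)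
    (u v : V) : ∑ w, π₁ u v * π₂ v w / mu G D m v = π₁ u v := by
  rw [← sum_div, ← mul_sum, h₂.sum_left]
  rcases eq_or_ne (mu G D m v) 0 with h | h
  · rw [h, div_zero]
    exact (le_antisymm (h ▸ h₁.le_mu_right u v) (h₁.nonneg u v)).symm
  · exact mul_div_cancel_right₀ _ h

lemma sum_glue_summand_left (h₁ : IsTransportPlan G D x m π₁) (h₂ : IsTransportPlan G D m y π₂)
    (v w : V) : ∑ u, π₁ u v * π₂ v w / mu G D m v = π₂ v w := by
  rw [← sum_div, ← sum_mul, h₁.sum_right]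
  rcases eq_or_ne (mu G D m v) 0 with h | h
  · rw [h, div_zero]
    exact (le_antisymm (h ▸ h₂.le_mu_left v w) (h₂.nonneg v w)).symm
  · exact mul_div_cancel_left₀ _ h

lemma isTransportPlan_glue (h₁ : IsTransportPlan G D x m π₁) (h₂ : IsTransportPlan G D m y π₂) :
    IsTransportPlan G D x y (glue π₁ π₂ (mu G D m)) where
  nonneg u w := sum_nonneg fun v _ =>
    div_nonneg (mul_nonneg (h₁.nonneg u v) (h₂.nonneg v w)) (mu_nonneg m v)
  sum_left u := by
    simp only [glue]
    rw [sum_comm, ← h₁.sum_left u]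
    exact sum_congr rfl fun v _ => sum_glue_summand_right h₁ h₂ u v
  sum_right w := by
    simp only [glue]
    rw [sum_comm, ← h₂.sum_right w]
    exact sum_congr rfl fun v _ => sum_glue_summand_left h₁ h₂ v w

lemma transportCost_glue_le (hconn : G.Connected) (h₁ : IsTransportPlan G D x m π₁)
    (h₂ : IsTransportPlan G D m y π₂) :
    transportCost G (glue π₁ π₂ (mu G D m)) ≤ transportCost G π₁ + transportCost G π₂ := by
  set t : V → V → V → ℝ := fun u v w => π₁ u v * π₂ v w / mu G D m v
  have ht : ∀ u v w, 0 ≤ t u v w := fun u v w =>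
    div_nonneg (mul_nonneg (h₁.nonneg u v) (h₂.nonneg v w)) (mu_nonneg m v)
  calc transportCost G (glue π₁ π₂ (mu G D m))
      = ∑ u, ∑ w, ∑ v, (G.dist u w : ℝ) * t u v w := by
        simp only [transportCost, glue, mul_sum]; rfl
    _ ≤ ∑ u, ∑ w, ∑ v, ((G.dist u v : ℝ) * t u v w + (G.dist v w : ℝ) * t u v w) := by
      gcongr with u _ w _ v _
      rw [← add_mul]
      gcongr
      · exact ht u v w
      · exact_mod_cast hconn.dist_triangle
    _ = ∑ u, ∑ v, (G.dist u v : ℝ) * ∑ w, t u v w + ∑ v, ∑ w, (G.dist v w : ℝ) * ∑ u, t u v w := by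
      simp only [sum_add_distrib, mul_sum]
      congr 1
      · exact sum_congr rfl fun u _ => sum_comm
      · exact sum_comm.trans ((sum_congr rfl fun w _ => sum_comm).trans sum_comm)
    _ = transportCost G π₁ + transportCost G π₂ := by
      simp only [t, sum_glue_summand_right h₁ h₂, sum_glue_summand_left h₁ h₂, transportCost]

lemma W1_triangle (hconn : G.Connected) (hreg : G.IsRegularOfDegree D) (x m y : V) :
    W1 G D x y ≤ W1 G D x m + W1 G D m y := by
  obtain ⟨π₁, h₁, hc₁⟩ := exists_isTransportPlan_transportCost_eq hconn hreg x m
  obtain ⟨π₂, h₂, hc₂⟩ := exists_isTransportPlan_transportCost_eq hconn hreg m y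
  rw [← hc₁, ← hc₂]
  exact (W1_le_transportCost (isTransportPlan_glue h₁ h₂)).trans
    (transportCost_glue_le hconn h₁ h₂)

lemma W1_self_nonpos (y : V) : W1 G D y y ≤ 0 := by
  refine (W1_le_transportCost (isTransportPlan_diag y)).trans (le_of_eq ?_)
  refine sum_eq_zero fun u _ => sum_eq_zero fun v _ => ?_
  dsimp only
  split_ifs with h <;> simp [h]

end Gluing

section BonnetMyersSharp

variable [Fintype V] {G : SimpleGraph V} {D L : ℕ}

lemma W1_le_of_adj (hBM : BMSharp G D L) (hD : 0 < D) {y z : V} (hyz : G.Adj y z) :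
    (D + 1) * W1 G D y z ≤ D + 1 - 2 * D / L := by
  have hfin : {k : ℝ | ∃ x y, G.Adj x y ∧ k = kappa G D x y}.Finite :=
    (Set.finite_range fun q : V × V => kappa G D q.1 q.2).subset
      fun _ ⟨a, b, _, hk⟩ => ⟨(a, b), hk.symm⟩
  have hle := hBM ▸ csInf_le hfin.bddBelow ⟨y, z, hyz, rfl⟩
  have hD' : (0 : ℝ) < D := by exact_mod_cast hD
  have : (2 * D / L : ℝ) = 2 / L * D := by ring
  rw [kappa, div_mul_eq_mul_div, le_div_iff₀ hD'] at hle
  linarith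

lemma W1_le_length_mul (hconn : G.Connected) (hreg : G.IsRegularOfDegree D)
    (hBM : BMSharp G D L) (hD : 0 < D) {y z : V} (q : G.Walk y z) :
    (D + 1) * W1 G D y z ≤ q.length * (D + 1 - 2 * D / L) := by
  induction q with
  | nil => simpa using mul_nonpos_of_nonneg_of_nonpos (by positivity) (W1_self_nonpos _)
  | @cons u v w h q ih =>
    rw [SimpleGraph.Walk.length_cons]
    push_cast
    linarith [mul_le_mul_of_nonneg_left (W1_triangle hconn hreg u v w)
      (by positivity : (0 : ℝ) ≤ D + 1), W1_le_of_adj hBM hD h]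

lemma sum_ball_dist_le (hconn : G.Connected) (hreg : G.IsRegularOfDegree D)
    (hBM : BMSharp G D L) (hD : 0 < D) (a y : V) :
    ∑ v ∈ ball G y, (G.dist a v : ℝ) ≤ D + G.dist a y * (D + 1 - 2 * D / L) := by
  obtain ⟨q, hq⟩ := hconn.exists_walk_length_eq_dist a y
  have hdual := le_W1 hconn hreg (x := a) (y := y) _ (dist_sub_dist_le hconn a)
  rw [sum_ball_dist_self hconn hreg, div_le_iff₀' (by positivity)] at hdual
  have := hq ▸ W1_le_length_mul hconn hreg hBM hD q
  linarith


variable {x₀ p : V}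

lemma dist_add_dist_eq_of_mem_ball (hconn : G.Connected) (hreg : G.IsRegularOfDegree D)
    (hBM : BMSharp G D L) (hD : 0 < D) (hL : 0 < L) (hp : G.dist x₀ p = L) {y v : V}
    (hy : G.dist x₀ y + G.dist y p = L) (hv : v ∈ ball G y) :
    G.dist x₀ v + G.dist v p = L := by
  have hge : ∀ v, (L : ℝ) ≤ G.dist x₀ v + G.dist p v := fun v => by
    rw [G.dist_comm (u := p)]
    have : G.dist x₀ p ≤ G.dist x₀ v + G.dist v p := hconn.dist_triangle
    exact_mod_cast hp ▸ this
  have hy' : (G.dist x₀ y : ℝ) + G.dist p y = L := by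
    rw [G.dist_comm (u := p)]; exact_mod_cast hy
  have hsum : ∑ v ∈ ball G y, ((G.dist x₀ v : ℝ) + G.dist p v - L) ≤ 0 := by
    have hslack : (G.dist x₀ y : ℝ) * (D + 1 - 2 * D / L) + G.dist p y * (D + 1 - 2 * D / L) =
        L * (D + 1) - 2 * D := by
      rw [← add_mul, hy']
      field_simp
    rw [sum_sub_distrib, sum_add_distrib, sum_const, card_ball hconn hreg, nsmul_eq_mul]
    push_cast
    linarith [sum_ball_dist_le hconn hreg hBM hD x₀ y, sum_ball_dist_le hconn hreg hBM hD p y]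
  have := (sum_eq_zero_iff_of_nonneg fun v _ => sub_nonneg.mpr (hge v)).mp
    (le_antisymm hsum (sum_nonneg fun v _ => sub_nonneg.mpr (hge v))) v hv
  rw [G.dist_comm (u := p)] at this
  exact_mod_cast (sub_eq_zero.mp this)

lemma dist_add_dist_eq (hconn : G.Connected) (hreg : G.IsRegularOfDegree D)
    (hBM : BMSharp G D L) (hD : 0 < D) (hL : 0 < L) (hp : G.dist x₀ p = L) (y : V) :
    G.dist x₀ y + G.dist y p = L := by
  suffices ∀ {u} (q : G.Walk u y), G.dist x₀ u + G.dist u p = L → G.dist x₀ y + G.dist y p = L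
    from this (hconn.preconnected x₀ y).some (by simp [hp])
  intro u q
  induction q with
  | nil => exact id
  | cons h q ih => exact fun hu => ih (dist_add_dist_eq_of_mem_ball hconn hreg hBM hD hL hp hu
      ((mem_ball_iff hconn).mpr (Or.inr h)))

lemma sum_ball_dist_eq (hconn : G.Connected) (hreg : G.IsRegularOfDegree D)
    (hBM : BMSharp G D L) (hD : 0 < D) (hL : 0 < L) (hp : G.dist x₀ p = L) (y : V) :
    ∑ v ∈ ball G y, (G.dist x₀ v : ℝ) = D + G.dist x₀ y * (D + 1 - 2 * D / L) := by
  have hinterval : ∀ v, (G.dist x₀ v : ℝ) = L - G.dist p v := fun v => by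
    rw [G.dist_comm (u := p), eq_sub_iff_add_eq]
    exact_mod_cast dist_add_dist_eq hconn hreg hBM hD hL hp v
  have hslack : (L : ℝ) * (D + 1 - 2 * D / L) = L * (D + 1) - 2 * D := by
    field_simp
  refine le_antisymm (sum_ball_dist_le hconn hreg hBM hD x₀ y) ?_
  have hN := sum_ball_dist_le hconn hreg hBM hD p y
  simp only [hinterval, sum_sub_distrib, sum_const, card_ball hconn hreg, nsmul_eq_mul] at hN ⊢
  push_cast at hN ⊢
  nlinarith

lemma exists_radial_isTransportPlan (hconn : G.Connected) (hreg : G.IsRegularOfDegree D)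
    (hBM : BMSharp G D L) (hD : 0 < D) (hL : 0 < L) (hp : G.dist x₀ p = L) {y z : V}
    (hyz : G.Adj y z) (hz : G.dist x₀ z = G.dist x₀ y + 1) :
    ∃ π, IsTransportPlan G D y z π ∧
      ∀ u v, π u v ≠ 0 → G.dist x₀ u + G.dist u v = G.dist x₀ v := by
  have hgap : ∑ v ∈ ball G z, (G.dist x₀ v : ℝ) - ∑ v ∈ ball G y, (G.dist x₀ v : ℝ) =
      D + 1 - 2 * D / L := by
    rw [sum_ball_dist_eq hconn hreg hBM hD hL hp, sum_ball_dist_eq hconn hreg hBM hD hL hp, hz]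
    push_cast
    ring
  have hW : W1 G D y z = (∑ v ∈ ball G z, (G.dist x₀ v : ℝ) -
      ∑ v ∈ ball G y, (G.dist x₀ v : ℝ)) / (D + 1) := by
    refine le_antisymm ?_ (le_W1 hconn hreg _ (dist_sub_dist_le hconn x₀))
    rw [hgap, le_div_iff₀' (by positivity)]
    exact W1_le_of_adj hBM hD hyz
  obtain ⟨π, hπ, hsupp⟩ :=
    exists_isTransportPlan_of_W1_eq hconn hreg _ (dist_sub_dist_le hconn x₀) hW
  refine ⟨π, hπ, fun u v huv => ?_⟩
  have := hsupp u v huv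
  exact_mod_cast (by linarith : (G.dist x₀ u : ℝ) + G.dist u v = G.dist x₀ v)

end BonnetMyersSharp

section RadialPlans

variable [Fintype V] {G : SimpleGraph V} {D : ℕ} {x₀ : V} {π : V → V → ℝ}

lemma eq_of_radial_isTransportPlan (hconn : G.Connected) {x₁ x₂ : V}
    (hπ : IsTransportPlan G D x₁ x₂ π)
    (hrad : ∀ u v, π u v ≠ 0 → G.dist x₀ u + G.dist u v = G.dist x₀ v)
    (hx₁ : G.dist x₀ x₁ = 1) {w w' : V}
    (hw : G.dist x₀ w = 1 ∧ G.Adj w x₂ ∧ w ∉ ball G x₁)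
    (hw' : G.dist x₀ w' = 1 ∧ G.Adj w' x₂ ∧ w' ∉ ball G x₁) : w = w' := by
  have hfrom_x₀ : ∀ v, G.dist x₀ v = 1 → G.Adj v x₂ → v ∉ ball G x₁ →
      π x₀ v = 1 / (D + 1) := by
    intro v hv hvx₂ hvx₁
    rw [hπ.eq_mu_right_of_forall_ne, mu_of_mem_ball ((mem_ball_iff hconn).mpr (Or.inr hvx₂.symm))]
    intro u hu
    by_contra hne
    have hpos := hconn.pos_dist_of_ne hu.symm
    have huv : u = v := hconn.dist_eq_zero_iff.mp (by have := hrad u v hne; omega)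
    exact hne (huv ▸ hπ.eq_zero_of_notMem_ball hvx₁ v)
  by_contra hne
  have hpair : π x₀ w + π x₀ w' ≤ ∑ v, π x₀ v := by
    rw [← sum_pair hne]
    exact sum_le_sum_of_subset_of_nonneg (subset_univ _) fun v _ _ => hπ.nonneg x₀ v
  rw [hπ.sum_left, mu_of_mem_ball (mem_ball.mpr (G.dist_comm.trans hx₁).le),
    hfrom_x₀ w hw.1 hw.2.1 hw.2.2, hfrom_x₀ w' hw'.1 hw'.2.1 hw'.2.2] at hpair
  linarith [(by positivity : (0 : ℝ) < 1 / (D + 1))]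

lemma exists_of_radial_isTransportPlan (hconn : G.Connected) {x₁ x₂ : V}
    (hπ : IsTransportPlan G D x₀ x₁ π)
    (hrad : ∀ u v, π u v ≠ 0 → G.dist x₀ u + G.dist u v = G.dist x₀ v)
    (hx₁ : G.dist x₀ x₁ = 1) (hx₂ : G.dist x₀ x₂ = 2) (h₁₂ : G.Adj x₁ x₂) :
    ∃ w, G.dist x₀ w = 1 ∧ G.Adj w x₂ ∧ w ∉ ball G x₁ := by
  by_contra! hno
  have hrow_x₀ : ∀ v ≠ x₀, π x₀ v = 0 := by
    refine fun v hv => hπ.eq_zero_of_eq_mu_left ?_ hv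
    rw [mu_of_mem_ball (mem_ball.mpr (by simp)),
      ← mu_of_mem_ball (mem_ball.mpr (G.dist_comm.trans hx₁).le)]
    refine hπ.eq_mu_right_of_forall_ne fun u hu => ?_
    by_contra hne
    have := hrad u x₀ hne
    rw [SimpleGraph.dist_self] at this
    exact hu (hconn.dist_eq_zero_iff.mp (by omega)).symm
  have hrow : ∀ u, G.dist x₀ u = 1 → G.Adj u x₂ → ∀ v ≠ u, π u v = 0 := by
    intro u hu hux₂ v hv
    have hux₀ : u ≠ x₀ := by rintro rfl; simp at hu
    refine hπ.eq_zero_of_eq_mu_left ?_ hv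
    rw [mu_of_mem_ball (mem_ball.mpr hu.le), ← mu_of_mem_ball (hno u hu hux₂)]
    refine hπ.eq_mu_right_of_forall_ne fun u' hu' => ?_
    by_contra hne
    have := hrad u' u hne
    have := hconn.pos_dist_of_ne hu'
    have hu'x₀ : x₀ = u' := hconn.dist_eq_zero_iff.mp (by omega)
    exact hne (hu'x₀ ▸ hrow_x₀ u hux₀)
  have hzero : ∀ u, π u x₂ = 0 := by
    intro u
    by_contra hne
    have hu : u ∈ ball G x₀ := by_contra fun h => hne (hπ.eq_zero_of_notMem_ball h x₂)
    have hux₂ := hrad u x₂ hne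
    rcases Nat.le_one_iff_eq_zero_or_eq_one.mp (mem_ball.mp hu) with h₀ | h₁
    · obtain rfl := hconn.dist_eq_zero_iff.mp h₀
      exact hne (hrow_x₀ x₂ (by rintro rfl; simp at hx₂))
    · have hadj : G.Adj u x₂ := SimpleGraph.dist_eq_one_iff_adj.mp (by omega)
      exact hne (hrow u h₁ hadj x₂ (by rintro rfl; omega))
  have := hπ.sum_right x₂
  simp only [hzero, sum_const_zero, mu_of_mem_ball ((mem_ball_iff hconn).mpr (Or.inr h₁₂))] at this
  linarith [(by positivity : (0 : ℝ) < 1 / (D + 1))]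

end RadialPlans

theorem stmt_general [Fintype V] (G : SimpleGraph V) (hconn : G.Connected)
    (D L : ℕ) (hD : 0 < D) (hL : 0 < L) (hreg : G.IsRegularOfDegree D)
    (hBM : BMSharp G D L)
    (x0 : V) (hpole : ∃ p, G.dist x0 p = L)
    (x1 x2 : V) (hx1 : G.dist x0 x1 = 1) (hx2 : G.dist x0 x2 = 2)
    (h12 : G.Adj x1 x2) :
    ∃! w : V, G.dist x0 w = 1 ∧ G.Adj w x2 ∧ w ≠ x1 ∧ ¬ G.Adj w x1 := by
  obtain ⟨p, hp⟩ := hpole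
  obtain ⟨σ, hσ, hσrad⟩ := exists_radial_isTransportPlan hconn hreg hBM hD hL hp
    (SimpleGraph.dist_eq_one_iff_adj.mp hx1) (by rw [hx1, SimpleGraph.dist_self])
  obtain ⟨π, hπ, hπrad⟩ := exists_radial_isTransportPlan hconn hreg hBM hD hL hp h12
    (by rw [hx1, hx2])
  have hball : ∀ w, w ∉ ball G x1 ↔ w ≠ x1 ∧ ¬ G.Adj w x1 := fun w => by
    rw [mem_ball_iff hconn, G.adj_comm]
    tauto
  simp only [← hball]
  obtain ⟨w, hw⟩ := exists_of_radial_isTransportPlan hconn hσ hσrad hx1 hx2 h12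
  exact ⟨w, hw, fun w' hw' => eq_of_radial_isTransportPlan hconn hπ hπrad hx1 hw' hw⟩

theorem stmt [Fintype V] (G : SimpleGraph V) (hconn : G.Connected)
    (D L : ℕ) (hD : 0 < D) (hL : 0 < L) (hreg : G.IsRegularOfDegree D)
    (hdiam : G.diam = L) (hBM : BMSharp G D L)
    (x0 : V) (hpole : ∃ p, G.dist x0 p = L)
    (x1 x2 : V) (hx1 : G.dist x0 x1 = 1) (hx2 : G.dist x0 x2 = 2)
    (h12 : G.Adj x1 x2) :
    ∃! w : V, G.dist x0 w = 1 ∧ G.Adj w x2 ∧ w ≠ x1 ∧ ¬ G.Adj w x1 :=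
  stmt_general G hconn D L hD hL hreg hBM x0 hpole x1 x2 hx1 hx2 h12

end BMS
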